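/- arXiv:1803.03282 — 2 statements merged into one kernel-verified Lean document; each statement's English description precedes it below -/
import Mathlib

section
/- Let w ∈ W_n^{(k)} have −1 as an entry at some position > k. Then the permutation w' obtained from w by replacing the entry −1 by 1 among its entries at positions > k (and reordering increasingly) belongs to W_n^{(k)}, and w covers w'. -/
/-- The hyperoctahedral group `W_n`: bijections `w : ℤ → ℤ` with `w (-i) = -w i`
and `w i = i` whenever `n < |i|`. -/
def SignedPerm (n : ℕ) (w : ℤ → ℤ) : Prop :=
  Function.Bijective w ∧ (∀ i : ℤ, w (-i) = -w i) ∧ (∀ i : ℤ, (n : ℤ) < |i| → w i = i)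

/-- The number of inversions `#{(i,j) : 1 ≤ i < j ≤ n, w i > w j}`. -/
noncomputable def invCount (n : ℕ) (w : ℤ → ℤ) : ℕ :=
  ((Finset.Icc (1 : ℤ) (n : ℤ) ×ˢ Finset.Icc (1 : ℤ) (n : ℤ)).filter
    (fun p => p.1 < p.2 ∧ w p.2 < w p.1)).card

/-- The length `ℓ(w) = inv(w) - Σ_{1 ≤ j ≤ n, w j < 0} w j`. -/
noncomputable def len (n : ℕ) (w : ℤ → ℤ) : ℤ :=
  (invCount n w : ℤ) - ∑ j ∈ (Finset.Icc (1 : ℤ) (n : ℤ)).filter (fun j => w j < 0), w j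

/-- `w` is `k`-Grassmannian: `0 < w 1 < ⋯ < w k` and `w (k+1) < ⋯ < w n`. -/
def Grassmannian (n k : ℕ) (w : ℤ → ℤ) : Prop :=
  SignedPerm n w ∧
  (∀ i : ℤ, 1 ≤ i → i ≤ (k : ℤ) → 0 < w i) ∧
  (∀ i j : ℤ, 1 ≤ i → i < j → j ≤ (k : ℤ) → w i < w j) ∧
  (∀ i j : ℤ, (k : ℤ) < i → i < j → j ≤ (n : ℤ) → w i < w j)

/-- A reflection of `W_n`: either the transposition pair `(i j)(-i -j)` with
`1 ≤ i < |j| ≤ n`, or the sign change `i ↔ -i` with `1 ≤ i ≤ n`. -/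
def IsReflection (n : ℕ) (t : ℤ → ℤ) : Prop :=
  (∃ i j : ℤ, 1 ≤ i ∧ i < |j| ∧ |j| ≤ (n : ℤ) ∧
    t = fun m => if m = i then j else if m = j then i
      else if m = -i then -j else if m = -j then -i else m) ∨
  (∃ i : ℤ, 1 ≤ i ∧ i ≤ (n : ℤ) ∧
    t = fun m => if m = i then -i else if m = -i then i else m)

/-- `w` covers `w'` in the Bruhat order: `w' = w ∘ t` for a reflection `t` and
`ℓ(w) = ℓ(w') + 1`. -/
def Covers (n : ℕ) (w w' : ℤ → ℤ) : Prop :=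
  ∃ t : ℤ → ℤ, IsReflection n t ∧ w' = w ∘ t ∧ len n w = len n w' + 1

/-- Multiset of entries of `w` at positions `1, …, k`. -/
noncomputable def entriesLow (k : ℕ) (w : ℤ → ℤ) : Multiset ℤ :=
  (Finset.Icc (1 : ℤ) (k : ℤ)).val.map w

/-- Multiset of entries of `w` at positions `k+1, …, n`. -/
noncomputable def entriesHigh (n k : ℕ) (w : ℤ → ℤ) : Multiset ℤ :=
  (Finset.Icc ((k : ℤ) + 1) (n : ℤ)).val.map w

/-- `d_i = #{j : λ_j > u_i}`, the number of negative entries of `w` at positions `> k`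
whose absolute value exceeds `w i`. -/
noncomputable def dcount (n k : ℕ) (w : ℤ → ℤ) (i : ℤ) : ℕ :=
  ((Finset.Icc ((k : ℤ) + 1) (n : ℤ)).filter (fun j => w j < 0 ∧ w i < -(w j))).card

/-- `μ_i = #{j : v_j > u_i}`, the number of positive entries of `w` at positions `> k`
exceeding `w i`. -/
noncomputable def mucount (n k : ℕ) (w : ℤ → ℤ) (i : ℤ) : ℕ :=
  ((Finset.Icc ((k : ℤ) + 1) (n : ℤ)).filter (fun j => 0 < w j ∧ w i < w j)).card

/-- `α_i = u_i - i + d_i`. -/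
noncomputable def alphaPart (n k : ℕ) (w : ℤ → ℤ) (i : ℤ) : ℤ :=
  w i - i + (dcount n k w i : ℤ)

/-- Pair of type B1: `w'` is obtained from `w` by replacing the entry `-1`
(at a position `> k`) by `1`. -/
def TypeB1 (n k : ℕ) (w w' : ℤ → ℤ) : Prop :=
  Grassmannian n k w ∧ Grassmannian n k w' ∧
  (-1 : ℤ) ∈ entriesHigh n k w ∧
  entriesLow k w' = entriesLow k w ∧
  entriesHigh n k w' = 1 ::ₘ (entriesHigh n k w).erase (-1)

/-- Pair of type B2: for some `a > 1`, `w'` is obtained from `w` by replacing the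
entries `-a` and `a-1` (at positions `> k`) by `-(a-1)` and `a`. -/
def TypeB2 (n k : ℕ) (w w' : ℤ → ℤ) : Prop :=
  Grassmannian n k w ∧ Grassmannian n k w' ∧
  ∃ a : ℤ, 1 < a ∧ (-a) ∈ entriesHigh n k w ∧ (a - 1) ∈ entriesHigh n k w ∧
    entriesLow k w' = entriesLow k w ∧
    entriesHigh n k w' =
      a ::ₘ (-(a - 1)) ::ₘ (((entriesHigh n k w).erase (-a)).erase (a - 1))

/-- Pair of type B3: for some `a > x > 0`, `w'` is obtained from `w` by exchanging
the entry `a` (at a position `≤ k`) with the entry `a - x` (at a position `> k`). -/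
def TypeB3 (n k : ℕ) (w w' : ℤ → ℤ) : Prop :=
  Grassmannian n k w ∧ Grassmannian n k w' ∧
  ∃ a x : ℤ, 0 < x ∧ x < a ∧
    a ∈ entriesLow k w ∧ (a - x) ∈ entriesHigh n k w ∧
    entriesLow k w' = (a - x) ::ₘ (entriesLow k w).erase a ∧
    entriesHigh n k w' = a ::ₘ (entriesHigh n k w).erase (a - x)

/-- Pair of type B4: for some `a > x > 0`, `w'` is obtained from `w` by replacing
the entry `a - x` (at a position `≤ k`) by `a` and the entry `-a` (at a position `> k`)
by `-(a-x)`. -/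
def TypeB4 (n k : ℕ) (w w' : ℤ → ℤ) : Prop :=
  Grassmannian n k w ∧ Grassmannian n k w' ∧
  ∃ a x : ℤ, 0 < x ∧ x < a ∧
    (a - x) ∈ entriesLow k w ∧ (-a) ∈ entriesHigh n k w ∧
    entriesLow k w' = a ::ₘ (entriesLow k w).erase (a - x) ∧
    entriesHigh n k w' = (-(a - x)) ::ₘ (entriesHigh n k w).erase (-a)

/-- The longest element `w₀` of `W_n^{(k)}`: `w₀ i = i` for `1 ≤ i ≤ k` and
`w₀ i = -(n + k + 1 - i)` for `k < i ≤ n` (extended to a signed permutation of `ℤ`). -/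
def w0 (n k : ℕ) : ℤ → ℤ := fun i =>
  if (k : ℤ) < i ∧ i ≤ (n : ℤ) then -((n : ℤ) + (k : ℤ) + 1 - i)
  else if -(n : ℤ) ≤ i ∧ i < -(k : ℤ) then (n : ℤ) + (k : ℤ) + 1 + i
  else i

/-- The simple reflection `s_i`: for `i = 0` the sign change `1 ↔ -1`, and for `i ≥ 1`
the swap `i ↔ i+1`, `-i ↔ -(i+1)`. -/
def simpleRefl (i : ℕ) : ℤ → ℤ :=
  if i = 0 then fun m => if m = 1 then -1 else if m = -1 then 1 else m
  else fun m =>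
    if m = (i : ℤ) then (i : ℤ) + 1 else if m = (i : ℤ) + 1 then (i : ℤ)
    else if m = -(i : ℤ) then -(i : ℤ) - 1 else if m = -(i : ℤ) - 1 then -(i : ℤ) else m

/-!
Let `p > k` be the position of the entry `-1` of `w`, and put `w' = w ∘ s_p` with `s_p` the
sign change `p ↔ -p`; then `w'` has entry `1` at `p` and agrees with `w` at all other positive
positions. No other entry of `w` lies in `[-1, 1]`, so on positive positions `w` and `w'` induce
the same order: `w'` is again `k`-Grassmannian and has the same inversions as `w`. The sum of
the negative entries loses exactly the summand `-1`, hence `ℓ(w) = ℓ(w') + 1`.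
-/

def signFlip (p : ℤ) : ℤ → ℤ := fun m => if m = p then -p else if m = -p then p else m

section signFlip

variable {n : ℕ} {p m : ℤ}

theorem signFlip_apply_self : signFlip p p = -p := if_pos rfl

theorem signFlip_apply_of_ne (h₁ : m ≠ p) (h₂ : m ≠ -p) : signFlip p m = m := by
  simp [signFlip, h₁, h₂]

theorem signFlip_involutive : Function.Involutive (signFlip p) := by
  intro m; unfold signFlip; split_ifs <;> omega

theorem signFlip_neg : signFlip p (-m) = -signFlip p m := by
  unfold signFlip; split_ifs <;> omega

theorem isReflection_signFlip (h₁ : 1 ≤ p) (h₂ : p ≤ n) : IsReflection n (signFlip p) :=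
  Or.inr ⟨p, h₁, h₂, rfl⟩

theorem signedPerm_signFlip (hp : |p| ≤ n) : SignedPerm n (signFlip p) := by
  refine ⟨signFlip_involutive.bijective, fun _ => signFlip_neg, fun i hi => ?_⟩
  rw [signFlip_apply_of_ne] <;> cases abs_cases i <;> cases abs_cases p <;> omega

end signFlip

namespace SignedPerm

variable {n : ℕ} {w t : ℤ → ℤ}

theorem comp (hw : SignedPerm n w) (ht : SignedPerm n t) : SignedPerm n (w ∘ t) :=
  ⟨hw.1.comp ht.1, fun i => by simp [ht.2.1, hw.2.1],
    fun i hi => by simp [ht.2.2 i hi, hw.2.2 i hi]⟩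

theorem apply_zero (hw : SignedPerm n w) : w 0 = 0 := by
  have := hw.2.1 0; rw [neg_zero] at this; omega

theorem one_lt_abs_apply (hw : SignedPerm n w) {p m : ℤ} (hwp : w p = -1)
    (h₁ : m ≠ p) (h₂ : m ≠ -p) (h₀ : m ≠ 0) : 1 < |w m| := by
  have hwmp : w (-p) = 1 := by rw [hw.2.1, hwp, neg_neg]
  have : w m ≠ -1 := fun h => h₁ (hw.1.1 (h.trans hwp.symm))
  have : w m ≠ 1 := fun h => h₂ (hw.1.1 (h.trans hwmp.symm))
  have : w m ≠ 0 := fun h => h₀ (hw.1.1 (h.trans hw.apply_zero.symm))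
  cases abs_cases (w m) <;> omega

end SignedPerm

theorem Multiset.map_eq_cons_erase_of_eqOn {α β : Type*} [DecidableEq β] {s : Finset α}
    {f g : α → β} {p : α} (hp : p ∈ s) (hfg : ∀ m ∈ s, m ≠ p → g m = f m) :
    s.val.map g = g p ::ₘ (s.val.map f).erase (f p) := by
  classical
  have hsplit : s.val = p ::ₘ s.val.erase p := (Multiset.cons_erase hp).symm
  rw [hsplit, Multiset.map_cons, Multiset.map_cons, Multiset.erase_cons_head]
  refine congrArg _ (Multiset.map_congr rfl fun m hm => ?_)
  obtain ⟨hmp, hm⟩ := (Multiset.Nodup.mem_erase_iff s.nodup).1 hm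
  exact hfg m hm hmp

section FlipMinusOne

variable {n k : ℕ} {w : ℤ → ℤ} {p : ℤ}

theorem comp_signFlip_apply_of_pos (hp : 1 ≤ p) {m : ℤ} (hm : 1 ≤ m) (hmp : m ≠ p) :
    (w ∘ signFlip p) m = w m := by
  rw [Function.comp_apply, signFlip_apply_of_ne hmp (by omega)]

theorem comp_signFlip_apply_self (hw : SignedPerm n w) (hwp : w p = -1) :
    (w ∘ signFlip p) p = 1 := by
  rw [Function.comp_apply, signFlip_apply_self, hw.2.1, hwp, neg_neg]

theorem comp_signFlip_lt_iff (hw : SignedPerm n w) (hwp : w p = -1) (hp : 1 ≤ p)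
    {i j : ℤ} (hi : 1 ≤ i) (hj : 1 ≤ j) :
    (w ∘ signFlip p) i < (w ∘ signFlip p) j ↔ w i < w j := by
  have hflip := comp_signFlip_apply_self hw hwp
  have hbig : ∀ m, 1 ≤ m → m ≠ p → 1 < |w m| := fun m hm hmp =>
    hw.one_lt_abs_apply hwp hmp (by omega) (by omega)
  rcases eq_or_ne i p with rfl | hip <;> rcases eq_or_ne j i with rfl | hji
  · simp
  · have := hbig j hj hji
    rw [hflip, hwp, comp_signFlip_apply_of_pos hp hj hji]
    cases abs_cases (w j) <;> omega
  · simp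
  rcases eq_or_ne j p with rfl | hjp
  · have := hbig i hi hip
    rw [hflip, hwp, comp_signFlip_apply_of_pos hp hi hip]
    cases abs_cases (w i) <;> omega
  · rw [comp_signFlip_apply_of_pos hp hi hip, comp_signFlip_apply_of_pos hp hj hjp]

theorem grassmannian_comp_signFlip (hw : Grassmannian n k w) (hwp : w p = -1)
    (hkp : (k : ℤ) < p) (hpn : p ≤ n) : Grassmannian n k (w ∘ signFlip p) := by
  obtain ⟨hsp, hpos, hlow, hhigh⟩ := hw
  have hp : 1 ≤ p := by omega
  refine ⟨hsp.comp (signedPerm_signFlip (by rw [abs_of_pos (by omega)]; exact hpn)),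
    fun i hi hik => ?_, fun i j hi hij hjk => ?_, fun i j hki hij hjn => ?_⟩
  · rw [comp_signFlip_apply_of_pos hp hi (by omega)]; exact hpos i hi hik
  · exact (comp_signFlip_lt_iff hsp hwp hp hi (by omega)).2 (hlow i j hi hij hjk)
  · exact (comp_signFlip_lt_iff hsp hwp hp (by omega) (by omega)).2 (hhigh i j hki hij hjn)

theorem invCount_comp_signFlip (hw : SignedPerm n w) (hwp : w p = -1) (hp : 1 ≤ p) :
    invCount n (w ∘ signFlip p) = invCount n w := by
  unfold invCount
  congr 1
  refine Finset.filter_congr fun x hx => ?_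
  simp only [Finset.mem_product, Finset.mem_Icc] at hx
  rw [comp_signFlip_lt_iff hw hwp hp hx.2.1 hx.1.1]

theorem len_comp_signFlip (hw : SignedPerm n w) (hwp : w p = -1) (hp : 1 ≤ p)
    (hpn : p ≤ n) : len n w = len n (w ∘ signFlip p) + 1 := by
  have hmem : p ∈ Finset.Icc (1 : ℤ) n := Finset.mem_Icc.2 ⟨hp, hpn⟩
  have hflip := comp_signFlip_apply_self hw hwp
  have hrest : ∀ j ∈ (Finset.Icc (1 : ℤ) n).erase p,
      (if (w ∘ signFlip p) j < 0 then (w ∘ signFlip p) j else 0) =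
        if w j < 0 then w j else 0 := fun j hj => by
    obtain ⟨hjp, hj⟩ := Finset.mem_erase.1 hj
    rw [comp_signFlip_apply_of_pos hp (Finset.mem_Icc.1 hj).1 hjp]
  unfold len
  rw [invCount_comp_signFlip hw hwp hp, Finset.sum_filter, Finset.sum_filter,
    ← Finset.add_sum_erase _ _ hmem, ← Finset.add_sum_erase _ _ hmem,
    Finset.sum_congr rfl hrest, hflip, hwp,
    if_neg (show ¬(1 : ℤ) < 0 by norm_num), if_pos (show (-1 : ℤ) < 0 by norm_num)]
  ring

theorem entriesLow_comp_signFlip (hp : (k : ℤ) < p) :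
    entriesLow k (w ∘ signFlip p) = entriesLow k w :=
  Multiset.map_congr rfl fun m hm => by
    rw [Finset.mem_val, Finset.mem_Icc] at hm
    exact comp_signFlip_apply_of_pos (by omega) hm.1 (by omega)

theorem entriesHigh_comp_signFlip (hw : SignedPerm n w) (hwp : w p = -1) (hkp : (k : ℤ) < p)
    (hpn : p ≤ n) :
    entriesHigh n k (w ∘ signFlip p) = 1 ::ₘ (entriesHigh n k w).erase (-1) := by
  have hflip := comp_signFlip_apply_self hw hwp
  have hrest : ∀ m ∈ Finset.Icc ((k : ℤ) + 1) n, m ≠ p → (w ∘ signFlip p) m = w m :=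
    fun m hm hmp => comp_signFlip_apply_of_pos (by omega) (by grind) hmp
  rw [entriesHigh, Multiset.map_eq_cons_erase_of_eqOn (Finset.mem_Icc.2 ⟨by omega, hpn⟩) hrest,
    hflip, hwp, entriesHigh]

end FlipMinusOne

theorem stmt_5_general (n k : ℕ) (w : ℤ → ℤ)
    (hw : Grassmannian n k w) (h1 : (-1 : ℤ) ∈ entriesHigh n k w) :
    ∃ w' : ℤ → ℤ, Grassmannian n k w' ∧
      entriesLow k w' = entriesLow k w ∧
      entriesHigh n k w' = 1 ::ₘ (entriesHigh n k w).erase (-1) ∧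
      Covers n w w' := by
  obtain ⟨p, hp, hwp⟩ := Multiset.mem_map.1 h1
  rw [Finset.mem_val, Finset.mem_Icc] at hp
  obtain ⟨hkp, hpn⟩ := hp
  exact ⟨w ∘ signFlip p, grassmannian_comp_signFlip hw hwp (by omega) hpn,
    entriesLow_comp_signFlip (by omega), entriesHigh_comp_signFlip hw.1 hwp (by omega) hpn,
    signFlip p, isReflection_signFlip (by omega) hpn, rfl,
    len_comp_signFlip hw.1 hwp (by omega) hpn⟩

/-- if `-1` is an entry of `w ∈ W_n^{(k)}` at a position `> k`, then the
permutation `w'` obtained by replacing `-1` by `1` among positions `> k` belongs to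
`W_n^{(k)}` and `w` covers `w'`. -/
theorem stmt_5 (n k : ℕ) (hn : 1 ≤ n) (hk : k ≤ n) (w : ℤ → ℤ)
    (hw : Grassmannian n k w) (h1 : (-1 : ℤ) ∈ entriesHigh n k w) :
    ∃ w' : ℤ → ℤ, Grassmannian n k w' ∧
      entriesLow k w' = entriesLow k w ∧
      entriesHigh n k w' = 1 ::ₘ (entriesHigh n k w).erase (-1) ∧
      Covers n w w' :=
  stmt_5_general n k w hw h1
end

section
/- Let w, w' ∈ W_n^{(k)} be such that w covers w'. Then the pair (w,w') is of type B2 if and only if the dual pair ((w')∨, w∨) is of type B2. -/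
/-!
Dualizing by `w₀` fixes the entries at positions `≤ k` and negates the multiset `H(w)` of entries
at positions `> k`. Writing the type-B2 condition symmetrically as the multiset identity
`{-a, a-1} + H(w') = {a, -(a-1)} + H(w)`, negation turns it into the same
identity for `H(w∨) = -H(w)` and `H(w'∨) = -H(w')` with the roles of the two pairs exchanged.
-/

namespace Multiset

variable {α : Type*} [DecidableEq α] {s t : Multiset α} {x y u v : α}

lemma cons_cons_eq_cons_cons_erase_erase (hxy : x ≠ y) (hxs : x ∈ s) (hys : y ∈ s) :
    u ::ₘ v ::ₘ s = x ::ₘ y ::ₘ u ::ₘ v ::ₘ (s.erase x).erase y := by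
  conv_lhs => rw [← cons_erase hxs, ← cons_erase ((mem_erase_of_ne hxy.symm).2 hys)]
  rw [cons_swap v, cons_swap u, cons_swap v, cons_swap u]

lemma mem_mem_eq_cons_cons_erase_erase_iff (hxy : x ≠ y) (hxu : x ≠ u) (hxv : x ≠ v)
    (hyu : y ≠ u) (hyv : y ≠ v) :
    (x ∈ s ∧ y ∈ s ∧ t = u ::ₘ v ::ₘ (s.erase x).erase y) ↔
      x ::ₘ y ::ₘ t = u ::ₘ v ::ₘ s := by
  constructor
  · rintro ⟨hxs, hys, rfl⟩
    rw [cons_cons_eq_cons_cons_erase_erase hxy hxs hys]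
  · intro h
    have hxs : x ∈ s := by
      have hx := mem_cons_self x (y ::ₘ t)
      rw [h] at hx
      simpa [hxu, hxv] using hx
    have hys : y ∈ s := by
      have hy := mem_cons_of_mem (b := x) (mem_cons_self y t)
      rw [h] at hy
      simpa [hyu, hyv] using hy
    rw [cons_cons_eq_cons_cons_erase_erase hxy hxs hys, cons_inj_right, cons_inj_right] at h
    exact ⟨hxs, hys, h⟩

end Multiset

lemma Int.map_add_sub_Icc (a b : ℤ) :
    (Finset.Icc a b).val.map (fun i => a + b - i) = (Finset.Icc a b).val := by
  have h : (Finset.Icc a b).map ⟨fun i => a + b - i, sub_right_injective⟩ = Finset.Icc a b := by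
    ext i
    simp only [Finset.mem_map, Finset.mem_Icc, Function.Embedding.coeFn_mk]
    exact ⟨fun ⟨j, hj, hji⟩ => by omega, fun hi => ⟨a + b - i, by omega, by omega⟩⟩
  simpa only [Finset.map_val, Function.Embedding.coeFn_mk] using congrArg Finset.val h

section w0

variable {n k : ℕ} {i : ℤ}

lemma w0_of_le (h1 : 1 ≤ i) (hk : i ≤ k) : w0 n k i = i := by
  unfold w0; split_ifs <;> omega

lemma w0_of_lt (hk : (k : ℤ) < i) (hn : i ≤ n) : w0 n k i = -((k + 1 + n : ℤ) - i) := by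
  unfold w0; split_ifs <;> omega

lemma w0_of_lt_abs (h : (n : ℤ) < |i|) : w0 n k i = i := by
  rcases abs_cases i with ⟨he, _⟩ | ⟨he, _⟩ <;> rw [he] at h <;> (unfold w0; split_ifs <;> omega)

lemma w0_neg (i : ℤ) : w0 n k (-i) = -w0 n k i := by
  unfold w0; split_ifs <;> omega

lemma w0_involutive : Function.Involutive (w0 n k) := by
  intro i; unfold w0; split_ifs <;> omega

end w0

section Grassmannian

variable {n k : ℕ} {w : ℤ → ℤ}

lemma SignedPerm.map_neg (hw : SignedPerm n w) (i : ℤ) : w (-i) = -w i := hw.2.1 i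

lemma Grassmannian.comp_w0 (hw : Grassmannian n k w) : Grassmannian n k (w ∘ w0 n k) := by
  obtain ⟨⟨hbij, hneg, hfix⟩, hpos, hlow, hhigh⟩ := hw
  refine ⟨⟨hbij.comp w0_involutive.bijective, fun i => ?_, fun i hi => ?_⟩,
    fun i h1 hk => ?_, fun i j h1 hij hk => ?_, fun i j hk hij hn => ?_⟩
  · simp only [Function.comp_apply, w0_neg, hneg]
  · simpa only [Function.comp_apply, w0_of_lt_abs hi] using hfix i hi
  · simpa only [Function.comp_apply, w0_of_le h1 hk] using hpos i h1 hk
  · simpa only [Function.comp_apply, w0_of_le (n := n) (k := k) h1 (by omega),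
      w0_of_le (n := n) (by omega) hk] using hlow i j h1 hij hk
  · simp only [Function.comp_apply, w0_of_lt (n := n) hk (by omega),
      w0_of_lt (k := k) (by omega) hn, hneg, neg_lt_neg_iff]
    exact hhigh _ _ (by omega) (by omega) (by omega)

lemma entriesLow_comp_w0 (w : ℤ → ℤ) : entriesLow k (w ∘ w0 n k) = entriesLow k w :=
  Multiset.map_congr rfl fun i hi => by
    rw [Finset.mem_val, Finset.mem_Icc] at hi
    rw [Function.comp_apply, w0_of_le hi.1 hi.2]

lemma entriesHigh_comp_w0 (hneg : ∀ i, w (-i) = -w i) :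
    entriesHigh n k (w ∘ w0 n k) = (entriesHigh n k w).map Neg.neg := by
  have hcongr : entriesHigh n k (w ∘ w0 n k) =
      (Finset.Icc ((k : ℤ) + 1) n).val.map (fun i => -w ((k + 1 + n : ℤ) - i)) :=
    Multiset.map_congr rfl fun i hi => by
      rw [Finset.mem_val, Finset.mem_Icc] at hi
      rw [Function.comp_apply, w0_of_lt (by omega) hi.2, hneg]
  rw [hcongr, entriesHigh]
  conv_rhs => rw [← Int.map_add_sub_Icc, Multiset.map_map, Multiset.map_map]
  rfl

end Grassmannian

lemma typeB2_iff {n k : ℕ} {w w' : ℤ → ℤ} :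
    TypeB2 n k w w' ↔ Grassmannian n k w ∧ Grassmannian n k w' ∧
      ∃ a : ℤ, 1 < a ∧ entriesLow k w' = entriesLow k w ∧
        -a ::ₘ (a - 1) ::ₘ entriesHigh n k w' = a ::ₘ -(a - 1) ::ₘ entriesHigh n k w := by
  refine and_congr_right' (and_congr_right' (exists_congr fun a => ?_))
  by_cases ha : 1 < a
  · rw [← Multiset.mem_mem_eq_cons_cons_erase_erase_iff (by omega) (by omega) (by omega)
      (by omega) (by omega)]
    tauto
  · simp only [ha, false_and]

theorem stmt_17_general (n k : ℕ) (w w' : ℤ → ℤ)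
    (hw : Grassmannian n k w) (hw' : Grassmannian n k w') :
    TypeB2 n k w w' ↔ TypeB2 n k (w' ∘ w0 n k) (w ∘ w0 n k) := by
  have hB2_neg (H H' : Multiset ℤ) (a : ℤ) :
      (-a ::ₘ (a - 1) ::ₘ H.map Neg.neg = a ::ₘ -(a - 1) ::ₘ H'.map Neg.neg) ↔
        (-a ::ₘ (a - 1) ::ₘ H' = a ::ₘ -(a - 1) ::ₘ H) := by
    rw [← (Multiset.map_injective neg_injective).eq_iff, eq_comm]
    simp only [Multiset.map_cons, Multiset.map_map, Function.comp_def, neg_neg, Multiset.map_id',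
      neg_sub]
  simp only [typeB2_iff, entriesLow_comp_w0, entriesHigh_comp_w0 hw.1.map_neg,
    entriesHigh_comp_w0 hw'.1.map_neg, hB2_neg, hw, hw', hw.comp_w0, hw'.comp_w0, true_and, eq_comm]

/-- if `w` covers `w'`, then `(w, w')` is of type B2 iff the dual pair
`((w')∨, w∨)` is of type B2. -/
theorem stmt_17 (n k : ℕ) (hn : 1 ≤ n) (hk : k ≤ n) (w w' : ℤ → ℤ)
    (hw : Grassmannian n k w) (hw' : Grassmannian n k w')
    (hcov : Covers n w w') :
    TypeB2 n k w w' ↔ TypeB2 n k (w' ∘ w0 n k) (w ∘ w0 n k) :=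
  stmt_17_general n k w w' hw hw'
end
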